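/- In the Lie algebra 𝔤₇ with α = 0 ≠ γ and δ ≠ 0, a null geodesic vector with k ≠ 0 and x₁ ≠ 0 must satisfy x₁ = ((β+γ)/δ)x₂ − ((β−γ)/δ)x₃, where [(β+γ)² + δ²]x₂² − 2(β²−γ²)x₂x₃ + [(β−γ)² − δ²]x₃² = 0; and this quadratic equation admits a nonzero real solution (x₂,x₃) if and only if 4βγ + δ² ≥ 0. -/

import Mathlib

/-- Lorentzian inner product of signature (+,+,-) on ℝ³ = ℝ × ℝ × ℝ. -/
def lor (x y : ℝ × ℝ × ℝ) : ℝ := x.1 * y.1 + x.2.1 * y.2.1 - x.2.2 * y.2.2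

/-- The bracket of the Lie algebra 𝔤₇:
[e₁,e₂]=−α e₁−β e₂−β e₃, [e₁,e₃]=α e₁+β e₂+β e₃, [e₂,e₃]=γ e₁+δ e₂+δ e₃. -/
def br7 (α β γ δ : ℝ) (x y : ℝ × ℝ × ℝ) : ℝ × ℝ × ℝ :=
  (-α * (x.1 * y.2.1 - x.2.1 * y.1) + α * (x.1 * y.2.2 - x.2.2 * y.1)
     + γ * (x.2.1 * y.2.2 - x.2.2 * y.2.1),
   -β * (x.1 * y.2.1 - x.2.1 * y.1) + β * (x.1 * y.2.2 - x.2.2 * y.1)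
     + δ * (x.2.1 * y.2.2 - x.2.2 * y.2.1),
   -β * (x.1 * y.2.1 - x.2.1 * y.1) + β * (x.1 * y.2.2 - x.2.2 * y.1)
     + δ * (x.2.1 * y.2.2 - x.2.2 * y.2.1))

theorem exists_ne_zero_quadratic_form_eq_zero_iff {a b c : ℝ} (ha : a ≠ 0) :
    (∃ t s : ℝ, (t, s) ≠ (0, 0) ∧ a * t ^ 2 + b * t * s + c * s ^ 2 = 0) ↔
      0 ≤ discrim a b c := by
  constructor
  · rintro ⟨t, s, hne, h⟩
    have hs : s ≠ 0 := by
      rintro rfl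
      have ht : t = 0 := by simpa [ha] using h
      exact hne (by rw [ht])
    rw [discrim_eq_sq_of_quadratic_eq_zero (x := t / s) (by field_simp; linear_combination h)]
    exact sq_nonneg _
  · intro hd
    obtain ⟨x, hx⟩ := exists_quadratic_eq_zero ha ⟨√(discrim a b c), (Real.mul_self_sqrt hd).symm⟩
    exact ⟨x, 1, by simp, by linear_combination hx⟩

def IsGeodesicVector (br : ℝ × ℝ × ℝ → ℝ × ℝ × ℝ → ℝ × ℝ × ℝ) (X : ℝ × ℝ × ℝ) (k : ℝ) : Prop :=
  ∀ Y, lor (br X Y) X = k * lor X Y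

section G7

variable {β γ δ x₁ x₂ x₃ k : ℝ}

theorem IsGeodesicVector.g7_e₁ (h : IsGeodesicVector (br7 0 β γ δ) (x₁, x₂, x₃) k) :
    β * (x₂ - x₃) ^ 2 = k * x₁ := by
  linear_combination (norm := (simp only [lor, br7]; ring)) h (1, 0, 0)

theorem IsGeodesicVector.g7_e₂_add_e₃ (h : IsGeodesicVector (br7 0 β γ δ) (x₁, x₂, x₃) k) :
    γ * x₁ * (x₂ - x₃) + δ * (x₂ - x₃) ^ 2 = k * (x₂ - x₃) := by
  linear_combination (norm := (simp only [lor, br7]; ring)) h (0, 1, 0) + h (0, 0, 1)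

/-- On the null cone `x₁² = -(x₂ - x₃)(x₂ + x₃)`, so after dividing the `e₁`-equation
`β (x₂ - x₃)² = k x₁ = (γ x₁ + δ (x₂ - x₃)) x₁` by `x₂ - x₃` the relation becomes linear. -/
theorem IsGeodesicVector.g7_null_linear (h : IsGeodesicVector (br7 0 β γ δ) (x₁, x₂, x₃) k)
    (hk : k ≠ 0) (hx₁ : x₁ ≠ 0) (hnull : x₁ ^ 2 + x₂ ^ 2 = x₃ ^ 2) :
    δ * x₁ = (β + γ) * x₂ - (β - γ) * x₃ := by
  have he₁ := h.g7_e₁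
  have he₂₃ := h.g7_e₂_add_e₃
  have hu : x₂ - x₃ ≠ 0 := by
    intro hu
    rw [hu, zero_pow two_ne_zero, mul_zero, eq_comm] at he₁
    exact (mul_ne_zero hk hx₁) he₁
  apply mul_left_cancel₀ (pow_ne_zero 3 hu)
  linear_combination x₁ * (x₂ - x₃) * he₂₃ - (x₂ - x₃) ^ 2 * he₁ - γ * (x₂ - x₃) ^ 2 * hnull

end G7

theorem discrim_g7_null_quadratic (β γ δ : ℝ) :
    discrim ((β + γ) ^ 2 + δ ^ 2) (-2 * (β ^ 2 - γ ^ 2)) ((β - γ) ^ 2 - δ ^ 2) =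
      4 * δ ^ 2 * (4 * β * γ + δ ^ 2) := by
  rw [discrim]; ring

theorem g7_null_geodesics_case_A_general (β γ δ : ℝ) (hδ : δ ≠ 0) :
    (∀ x₁ x₂ x₃ k : ℝ, k ≠ 0 → x₁ ≠ 0 → x₁ ^ 2 + x₂ ^ 2 = x₃ ^ 2 →
      (∀ Y : ℝ × ℝ × ℝ,
        lor (br7 0 β γ δ (x₁, x₂, x₃) Y) (x₁, x₂, x₃) = k * lor (x₁, x₂, x₃) Y) →
      x₁ = (β + γ) / δ * x₂ - (β - γ) / δ * x₃ ∧
        ((β + γ) ^ 2 + δ ^ 2) * x₂ ^ 2 - 2 * (β ^ 2 - γ ^ 2) * x₂ * x₃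
          + ((β - γ) ^ 2 - δ ^ 2) * x₃ ^ 2 = 0) ∧
    ((∃ x₂ x₃ : ℝ, (x₂, x₃) ≠ (0, 0) ∧
        ((β + γ) ^ 2 + δ ^ 2) * x₂ ^ 2 - 2 * (β ^ 2 - γ ^ 2) * x₂ * x₃
          + ((β - γ) ^ 2 - δ ^ 2) * x₃ ^ 2 = 0)
      ↔ 4 * β * γ + δ ^ 2 ≥ 0) := by
  refine ⟨fun x₁ x₂ x₃ k hk hx₁ hnull hgeo => ?_, ?_⟩
  · have hlin := IsGeodesicVector.g7_null_linear hgeo hk hx₁ hnull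
    refine ⟨?_, ?_⟩
    · field_simp
      linear_combination hlin
    · linear_combination (-(δ * x₁ + ((β + γ) * x₂ - (β - γ) * x₃))) * hlin + δ ^ 2 * hnull
  · have ha : (β + γ) ^ 2 + δ ^ 2 ≠ 0 := by positivity
    calc _ ↔ ∃ t s : ℝ, (t, s) ≠ (0, 0) ∧ ((β + γ) ^ 2 + δ ^ 2) * t ^ 2
            + -2 * (β ^ 2 - γ ^ 2) * t * s + ((β - γ) ^ 2 - δ ^ 2) * s ^ 2 = 0 := by
          simp only [neg_mul, ← sub_eq_add_neg]
      _ ↔ 0 ≤ 4 * δ ^ 2 * (4 * β * γ + δ ^ 2) := by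
          rw [exists_ne_zero_quadratic_form_eq_zero_iff ha, discrim_g7_null_quadratic]
      _ ↔ _ := by
          rw [ge_iff_le, mul_nonneg_iff_of_pos_left (by positivity)]

theorem g7_null_geodesics_case_A (β γ δ : ℝ) (hγ : γ ≠ 0) (hδ : δ ≠ 0) :
    (∀ x₁ x₂ x₃ k : ℝ, k ≠ 0 → x₁ ≠ 0 → x₁ ^ 2 + x₂ ^ 2 = x₃ ^ 2 →
      (∀ Y : ℝ × ℝ × ℝ,
        lor (br7 0 β γ δ (x₁, x₂, x₃) Y) (x₁, x₂, x₃) = k * lor (x₁, x₂, x₃) Y) →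
      x₁ = (β + γ) / δ * x₂ - (β - γ) / δ * x₃ ∧
        ((β + γ) ^ 2 + δ ^ 2) * x₂ ^ 2 - 2 * (β ^ 2 - γ ^ 2) * x₂ * x₃
          + ((β - γ) ^ 2 - δ ^ 2) * x₃ ^ 2 = 0) ∧
    ((∃ x₂ x₃ : ℝ, (x₂, x₃) ≠ (0, 0) ∧
        ((β + γ) ^ 2 + δ ^ 2) * x₂ ^ 2 - 2 * (β ^ 2 - γ ^ 2) * x₂ * x₃
          + ((β - γ) ^ 2 - δ ^ 2) * x₃ ^ 2 = 0)
      ↔ 4 * β * γ + δ ^ 2 ≥ 0) :=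
  g7_null_geodesics_case_A_general β γ δ hδ
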